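/- arXiv:2211.16695 — 2 statements merged into one kernel-verified Lean document; each statement's English description precedes it below -/
import Mathlib

section
/- Let Q_g : S² → ℝ be integrable with ⟨Q_g⟩ = 0, let ρ_g ∈ ℝ, R_g ∈ ℝ³, and let I_rec(Ω, ν) be the decomposed reconstruction with r = Ω·R_g and q = Q_g(Ω). Define ρ̄(ν) := ⟨I_rec(·, ν)⟩ (angular average over S²). Let σ_s : [ν₋, ν₊] → [0, ∞) be measurable with σ_s and σ_s κ integrable, and set σ_{s,g} := (1/Δν) ∫ σ_s dν. Then for every Ω ∈ S², the group scattering term evaluates exactly to ∫_{ν₋}^{ν₊} σ_s(ν) (ρ̄(ν) − I_rec(Ω, ν)) dν = − σ_{s,g} Q_g(Ω) − ( ∫_{ν₋}^{ν₊} σ_s κ dν / K ) · (Ω·R_g). -/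
open MeasureTheory Real

/-- The surface measure on the unit sphere `S² ⊂ ℝ³`. -/
noncomputable def sphereMeasure :
    Measure (Metric.sphere (0 : EuclideanSpace ℝ (Fin 3)) 1) :=
  (volume : Measure (EuclideanSpace ℝ (Fin 3))).toSphere

/-!
Split `I_rec(Ω, ν)` as a frequency-only part, plus `(κ(ν)/K) (Ω·R_g)`, plus `Q_g(Ω)/Δν`.
The surface measure is invariant under the antipodal map, so the odd function `Ω ↦ Ω·R_g` has
zero integral over the sphere, and `Q_g` has mean zero by assumption; hence `ρ̄(ν)` is exactly the
frequency-only part. The integrand `σ_s (ρ̄ − I_rec(Ω, ·))` is then `−(Q_g(Ω)/Δν) σ_s − ((Ω·R_g)/K) σ_s κ`,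
and integrating over the group gives the formula.
-/

open Set Pointwise

namespace MeasureTheory

theorem integral_eq_zero_of_odd {α F : Type*} [MeasurableSpace α] [InvolutiveNeg α]
    [MeasurableNeg α] [NormedAddCommGroup F] [NormedSpace ℝ F] (μ : Measure α)
    [μ.IsNegInvariant] {f : α → F} (hf : ∀ x, f (-x) = -f x) : ∫ x, f x ∂μ = 0 := by
  have hneg := (Measure.measurePreserving_neg μ).integral_comp' (f := MeasurableEquiv.neg α) f
  simp only [MeasurableEquiv.neg_apply, hf, integral_neg] at hneg
  have htwice : (2 : ℝ) • ∫ x, f x ∂μ = 0 := by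
    rw [two_smul]; nth_rewrite 1 [← hneg]; exact neg_add_cancel _
  exact (smul_eq_zero.mp htwice).resolve_left two_ne_zero

theorem Measure.toSphere_isNegInvariant {E : Type*} [NormedAddCommGroup E] [NormedSpace ℝ E]
    [MeasurableSpace E] [BorelSpace E] (μ : Measure E) [μ.IsNegInvariant] :
    μ.toSphere.IsNegInvariant := by
  refine ⟨Measure.ext fun s hs => ?_⟩
  have himage : ((↑) '' (-s) : Set E) = -((↑) '' s) := by
    ext x; constructor
    · rintro ⟨y, hy, rfl⟩; exact ⟨-y, hy, by simp⟩
    · rintro ⟨y, hy, hyx⟩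
      exact ⟨-y, by simpa using hy, by simp [hyx]⟩
  change μ.toSphere.map Neg.neg s = _
  rw [Measure.map_apply measurable_neg hs]
  change μ.toSphere (-s) = _
  rw [μ.toSphere_apply' hs.neg, μ.toSphere_apply' hs, himage, Set.smul_neg, Measure.measure_neg]

theorem integral_const_add_mul_add_mul {α : Type*} [MeasurableSpace α] (μ : Measure α)
    [IsFiniteMeasure μ] {f g : α → ℝ} (hf : Integrable f μ) (hg : Integrable g μ) (c a b : ℝ) :
    ∫ x, (c + a * f x + b * g x) ∂μ = μ.real univ * c + a * ∫ x, f x ∂μ + b * ∫ x, g x ∂μ := by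
  have hcf : Integrable (fun x => c + a * f x) μ := (integrable_const c).add (hf.const_mul a)
  rw [integral_add hcf (hg.const_mul b), integral_add (integrable_const c) (hf.const_mul a),
    integral_const, integral_const_mul, integral_const_mul, smul_eq_mul]

end MeasureTheory

instance : IsFiniteMeasure sphereMeasure := by
  unfold sphereMeasure; infer_instance

instance : sphereMeasure.IsNegInvariant :=
  Measure.toSphere_isNegInvariant volume

theorem sphereMeasure_real_univ : sphereMeasure.real univ = 4 * π := by
  rw [sphereMeasure, Measure.toSphere_real_apply_univ, measureReal_def,
    EuclideanSpace.volume_ball_fin_three, finrank_euclideanSpace_fin]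
  simp only [ENNReal.ofReal_one, one_pow, one_mul]
  rw [ENNReal.toReal_ofReal (by positivity)]
  ring

theorem integrable_sphereMeasure_dotProduct (R : Fin 3 → ℝ) :
    Integrable (fun Ω : Metric.sphere (0 : EuclideanSpace ℝ (Fin 3)) 1 =>
      ∑ i, (Ω : EuclideanSpace ℝ (Fin 3)) i * R i) sphereMeasure :=
  (by fun_prop : Continuous _).integrable_of_hasCompactSupport (.of_compactSpace _)

theorem integral_sphereMeasure_dotProduct (R : Fin 3 → ℝ) :
    ∫ Ω, ∑ i, (Ω : EuclideanSpace ℝ (Fin 3)) i * R i ∂sphereMeasure = 0 :=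
  integral_eq_zero_of_odd sphereMeasure fun Ω => by
    simp only [coe_neg_sphere, PiLp.neg_apply, neg_mul, Finset.sum_neg_distrib]

theorem group_scattering_term_eval_general
    (ν₁ ν₂ : ℝ) (hν : ν₁ < ν₂)
    (ω₁ κ : ℝ → ℝ)
    (hKpos : 0 < ∫ ν in ν₁..ν₂, κ ν)
    (ρg : ℝ) (Rg : Fin 3 → ℝ)
    (Qg : Metric.sphere (0 : EuclideanSpace ℝ (Fin 3)) 1 → ℝ)
    (hQgInt : Integrable Qg sphereMeasure)
    (hQg0 : (4 * π)⁻¹ * ∫ Ω, Qg Ω ∂sphereMeasure = 0)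
    (σs : ℝ → ℝ)
    (hσsInt : IntervalIntegrable σs volume ν₁ ν₂)
    (hσsκ : IntervalIntegrable (fun ν => σs ν * κ ν) volume ν₁ ν₂)
    (sρ : ℝ → ℝ)
    (sR : Metric.sphere (0 : EuclideanSpace ℝ (Fin 3)) 1 → ℝ → ℝ)
    (hsR : ∀ Ω ν, sR Ω ν = ((ν₂ - ν₁) * κ ν / (∫ ν' in ν₁..ν₂, κ ν') - 1) *
      (∑ i : Fin 3, (Ω : EuclideanSpace ℝ (Fin 3)) i * Rg i))
    (Irec : Metric.sphere (0 : EuclideanSpace ℝ (Fin 3)) 1 → ℝ → ℝ)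
    (hIrec : ∀ Ω ν, Irec Ω ν = (ν₂ - ν₁)⁻¹ *
      (ω₁ ν * ρg + (∑ i : Fin 3, (Ω : EuclideanSpace ℝ (Fin 3)) i * Rg i) + Qg Ω
        + sρ ν + sR Ω ν))
    (ρbar : ℝ → ℝ)
    (hρbar : ∀ ν, ρbar ν = (4 * π)⁻¹ * ∫ Ω, Irec Ω ν ∂sphereMeasure) :
    ∀ Ω : Metric.sphere (0 : EuclideanSpace ℝ (Fin 3)) 1,
      (∫ ν in ν₁..ν₂, σs ν * (ρbar ν - Irec Ω ν))
        = -(((ν₂ - ν₁)⁻¹ * ∫ ν in ν₁..ν₂, σs ν) * Qg Ω)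
          - ((∫ ν in ν₁..ν₂, σs ν * κ ν) / (∫ ν in ν₁..ν₂, κ ν)) *
            (∑ i : Fin 3, (Ω : EuclideanSpace ℝ (Fin 3)) i * Rg i) := by
  intro Ω
  have hΔ : ν₂ - ν₁ ≠ 0 := sub_ne_zero.2 hν.ne'
  have hQ0 : ∫ Ω', Qg Ω' ∂sphereMeasure = 0 :=
    (mul_eq_zero.mp hQg0).resolve_left (by positivity)
  have hIrec_split : ∀ Ω' ν, Irec Ω' ν = (ν₂ - ν₁)⁻¹ * (ω₁ ν * ρg + sρ ν)
      + κ ν / (∫ ν' in ν₁..ν₂, κ ν') * (∑ i : Fin 3, (Ω' : EuclideanSpace ℝ (Fin 3)) i * Rg i)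
      + (ν₂ - ν₁)⁻¹ * Qg Ω' := by
    intro Ω' ν
    rw [hIrec, hsR]
    field_simp
    ring
  have hρbar_eq : ∀ ν, ρbar ν = (ν₂ - ν₁)⁻¹ * (ω₁ ν * ρg + sρ ν) := by
    intro ν
    rw [hρbar, integral_congr_ae (.of_forall (hIrec_split · ν)),
      integral_const_add_mul_add_mul _ (integrable_sphereMeasure_dotProduct Rg) hQgInt,
      integral_sphereMeasure_dotProduct, hQ0, sphereMeasure_real_univ]
    field_simp
    ring
  have hintegrand : ∀ ν, σs ν * (ρbar ν - Irec Ω ν)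
      = -((ν₂ - ν₁)⁻¹ * Qg Ω) * σs ν
        + -((∑ i : Fin 3, (Ω : EuclideanSpace ℝ (Fin 3)) i * Rg i) / ∫ ν' in ν₁..ν₂, κ ν')
          * (σs ν * κ ν) := by
    intro ν
    rw [hρbar_eq, hIrec_split]
    ring
  rw [intervalIntegral.integral_congr fun ν _ => hintegrand ν,
    intervalIntegral.integral_add (hσsInt.const_mul _) (hσsκ.const_mul _),
    intervalIntegral.integral_const_mul, intervalIntegral.integral_const_mul]
  ring

/-- The group scattering term of the decomposed reconstruction evaluates exactly to
`∫ σ_s (ρ̄ − I_rec) dν = − σ_{s,g} Q_g(Ω) − (∫ σ_s κ / K) (Ω·R_g)`, where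
`ρ̄(ν)` is the angular average of the reconstruction. -/
theorem group_scattering_term_eval
    (ν₁ ν₂ : ℝ) (hν₀ : 0 ≤ ν₁) (hν : ν₁ < ν₂)
    (B ω₁ ω₂ κ : ℝ → ℝ)
    (hB : IntervalIntegrable B volume ν₁ ν₂)
    (hω₁int : IntervalIntegrable ω₁ volume ν₁ ν₂)
    (hω₂int : IntervalIntegrable ω₂ volume ν₁ ν₂)
    (hκint : IntervalIntegrable κ volume ν₁ ν₂)
    (hκpos : ∀ ν ∈ Set.Icc ν₁ ν₂, 0 < κ ν)
    (hKpos : 0 < ∫ ν in ν₁..ν₂, κ ν)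
    (ρg : ℝ) (Rg : Fin 3 → ℝ)
    (Qg : Metric.sphere (0 : EuclideanSpace ℝ (Fin 3)) 1 → ℝ)
    (hQgInt : Integrable Qg sphereMeasure)
    (hQg0 : (4 * π)⁻¹ * ∫ Ω, Qg Ω ∂sphereMeasure = 0)
    (σs : ℝ → ℝ) (hσsMeas : Measurable σs) (hσsNonneg : ∀ ν, 0 ≤ σs ν)
    (hσsInt : IntervalIntegrable σs volume ν₁ ν₂)
    (hσsκ : IntervalIntegrable (fun ν => σs ν * κ ν) volume ν₁ ν₂)
    (sρ : ℝ → ℝ)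
    (hsρ : ∀ ν, sρ ν = (ν₂ - ν₁) * B ν - ω₂ ν * (∫ ν' in ν₁..ν₂, B ν'))
    (sR : Metric.sphere (0 : EuclideanSpace ℝ (Fin 3)) 1 → ℝ → ℝ)
    (hsR : ∀ Ω ν, sR Ω ν = ((ν₂ - ν₁) * κ ν / (∫ ν' in ν₁..ν₂, κ ν') - 1) *
      (∑ i : Fin 3, (Ω : EuclideanSpace ℝ (Fin 3)) i * Rg i))
    (Irec : Metric.sphere (0 : EuclideanSpace ℝ (Fin 3)) 1 → ℝ → ℝ)
    (hIrec : ∀ Ω ν, Irec Ω ν = (ν₂ - ν₁)⁻¹ *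
      (ω₁ ν * ρg + (∑ i : Fin 3, (Ω : EuclideanSpace ℝ (Fin 3)) i * Rg i) + Qg Ω
        + sρ ν + sR Ω ν))
    (ρbar : ℝ → ℝ)
    (hρbar : ∀ ν, ρbar ν = (4 * π)⁻¹ * ∫ Ω, Irec Ω ν ∂sphereMeasure) :
    ∀ Ω : Metric.sphere (0 : EuclideanSpace ℝ (Fin 3)) 1,
      (∫ ν in ν₁..ν₂, σs ν * (ρbar ν - Irec Ω ν))
        = -(((ν₂ - ν₁)⁻¹ * ∫ ν in ν₁..ν₂, σs ν) * Qg Ω)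
          - ((∫ ν in ν₁..ν₂, σs ν * κ ν) / (∫ ν in ν₁..ν₂, κ ν)) *
            (∑ i : Fin 3, (Ω : EuclideanSpace ℝ (Fin 3)) i * Rg i) :=
  group_scattering_term_eval_general ν₁ ν₂ hν ω₁ κ hKpos ρg Rg Qg hQgInt hQg0 σs hσsInt hσsκ sρ sR
    hsR Irec hIrec ρbar hρbar
end

section
/- The function x ↦ x⁴ eˣ/(eˣ − 1)² is integrable on (0, ∞) and ∫₀^∞ x⁴ eˣ/(eˣ − 1)² dx = 4π⁴/15. -/
/-!
For `x > 0`, `eˣ/(eˣ - 1)² = ∑_{n ≥ 1} n e^{-nx}`, and `∫₀^∞ xᵏ n e^{-nx} dx = k!/nᵏ`.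
All terms are nonnegative, so the series may be integrated termwise, giving
`∫₀^∞ xᵏ eˣ/(eˣ - 1)² dx = k! ζ(k)`; for `k = 4` this is `24 · π⁴/90 = 4π⁴/15`.
-/

open MeasureTheory Real Set
open scoped Nat

section SeriesOfNonnegFunctions

variable {α : Type*} [MeasurableSpace α] {μ : Measure α} {F : ℕ → α → ℝ} {f : α → ℝ} {S : ℝ}

theorem lintegral_ofReal_eq_of_hasSum (hF_nonneg : ∀ n, 0 ≤ᵐ[μ] F n)
    (hF_int : ∀ n, Integrable (F n) μ) (hS : HasSum (fun n ↦ ∫ a, F n a ∂μ) S)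
    (hf : ∀ᵐ a ∂μ, HasSum (fun n ↦ F n a) (f a)) :
    ∫⁻ a, ENNReal.ofReal (f a) ∂μ = ENNReal.ofReal S := by
  have hF_nonneg' : ∀ᵐ a ∂μ, ∀ n, 0 ≤ F n a := ae_all_iff.mpr hF_nonneg
  calc ∫⁻ a, ENNReal.ofReal (f a) ∂μ = ∫⁻ a, ∑' n, ENNReal.ofReal (F n a) ∂μ := by
        refine lintegral_congr_ae ?_
        filter_upwards [hf, hF_nonneg'] with a ha ha'
        rw [← ha.tsum_eq, ENNReal.ofReal_tsum_of_nonneg ha' ha.summable]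
    _ = ∑' n, ENNReal.ofReal (∫ a, F n a ∂μ) := by
        rw [lintegral_tsum fun n ↦ (hF_int n).1.aemeasurable.ennreal_ofReal]
        congr 1 with n
        rw [ofReal_integral_eq_lintegral_ofReal (hF_int n) (hF_nonneg n)]
    _ = ENNReal.ofReal S := by
        rw [← ENNReal.ofReal_tsum_of_nonneg (fun n ↦ integral_nonneg_of_ae (hF_nonneg n))
          hS.summable, hS.tsum_eq]

theorem integrable_and_integral_eq_of_hasSum (hF_nonneg : ∀ n, 0 ≤ᵐ[μ] F n)
    (hF_int : ∀ n, Integrable (F n) μ) (hS : HasSum (fun n ↦ ∫ a, F n a ∂μ) S)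
    (hf : ∀ᵐ a ∂μ, HasSum (fun n ↦ F n a) (f a)) :
    Integrable f μ ∧ ∫ a, f a ∂μ = S := by
  have hf_nonneg : 0 ≤ᵐ[μ] f := by
    filter_upwards [hf, ae_all_iff.mpr hF_nonneg] with a ha ha'
    exact ha.nonneg ha'
  have hf_meas : AEStronglyMeasurable f μ :=
    aestronglyMeasurable_of_tendsto_ae Filter.atTop
      (fun n ↦ Finset.aestronglyMeasurable_fun_sum _ fun i _ ↦ (hF_int i).1)
      (hf.mono fun _ ha ↦ ha.tendsto_sum_nat)
  have hlint := lintegral_ofReal_eq_of_hasSum hF_nonneg hF_int hS hf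
  have hS_nonneg : 0 ≤ S := hS.nonneg fun n ↦ integral_nonneg_of_ae (hF_nonneg n)
  refine ⟨⟨hf_meas, ?_⟩, ?_⟩
  · rw [hasFiniteIntegral_iff_ofReal hf_nonneg, hlint]
    exact ENNReal.ofReal_lt_top
  · rw [integral_eq_lintegral_of_nonneg_ae hf_nonneg hf_meas, hlint,
      ENNReal.toReal_ofReal hS_nonneg]

end SeriesOfNonnegFunctions

theorem integral_pow_mul_exp_neg_mul_Ioi (k : ℕ) {r : ℝ} (hr : 0 < r) :
    ∫ x in Ioi (0 : ℝ), x ^ k * exp (-(r * x)) = k ! / r ^ (k + 1) := by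
  have h := integral_rpow_mul_exp_neg_mul_Ioi (a := k + 1) (by positivity) hr
  rw [add_sub_cancel_right, Gamma_nat_eq_factorial, ← Nat.cast_succ, rpow_natCast] at h
  simp only [rpow_natCast] at h
  rw [h, one_div_pow, one_div_mul_eq_div]

theorem integrableOn_pow_mul_exp_neg_mul_Ioi (k : ℕ) {r : ℝ} (hr : 0 < r) :
    IntegrableOn (fun x ↦ x ^ k * exp (-(r * x))) (Ioi 0) := by
  have h := integrableOn_rpow_mul_exp_neg_mul_rpow (p := 1) (s := k)
    (by linarith [k.cast_nonneg (α := ℝ)]) one_pos hr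
  simpa only [rpow_one, rpow_natCast, neg_mul] using h

theorem hasSum_coe_mul_exp_neg_mul {x : ℝ} (hx : 0 < x) :
    HasSum (fun n : ℕ ↦ n * exp (-(n * x))) (exp x / (exp x - 1) ^ 2) := by
  have hq : ‖exp (-x)‖ < 1 := by
    rw [norm_of_nonneg (exp_pos _).le, exp_lt_one_iff]; linarith
  have hx1 : exp x - 1 ≠ 0 := (sub_pos.mpr (one_lt_exp_iff.mpr hx)).ne'
  have hvalue : exp (-x) / (1 - exp (-x)) ^ 2 = exp x / (exp x - 1) ^ 2 := by
    rw [exp_neg]; field_simp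
  rw [← hvalue]
  refine (hasSum_coe_mul_geometric_of_norm_lt_one hq).congr_fun fun n ↦ ?_
  rw [← exp_nat_mul, mul_neg]

-- The series starts at `n = 0`, where both sides vanish (`k ≠ 0` and `x / 0 = 0`).
theorem integral_pow_mul_coe_mul_exp_neg_mul_Ioi {k : ℕ} (hk : k ≠ 0) (n : ℕ) :
    ∫ x in Ioi (0 : ℝ), x ^ k * (n * exp (-(n * x))) = k ! / n ^ k := by
  rcases n.eq_zero_or_pos with rfl | hn
  · simp [hk]
  have hn' : (0 : ℝ) < n := Nat.cast_pos.mpr hn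
  simp_rw [mul_left_comm _ (n : ℝ)]
  rw [integral_const_mul, integral_pow_mul_exp_neg_mul_Ioi k hn']
  field_simp
  ring

theorem integrableOn_pow_mul_coe_mul_exp_neg_mul_Ioi (k n : ℕ) :
    IntegrableOn (fun x ↦ x ^ k * (n * exp (-(n * x)))) (Ioi 0) := by
  rcases n.eq_zero_or_pos with rfl | hn
  · simp
  simp_rw [mul_left_comm _ (n : ℝ)]
  exact (integrableOn_pow_mul_exp_neg_mul_Ioi k (Nat.cast_pos.mpr hn)).const_mul _

theorem integrableOn_and_hasSum_integral_pow_mul_exp_div_sq {k : ℕ} (hk : 1 < k) :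
    IntegrableOn (fun x : ℝ ↦ x ^ k * exp x / (exp x - 1) ^ 2) (Ioi 0) ∧
      HasSum (fun n : ℕ ↦ (k ! : ℝ) / n ^ k)
        (∫ x in Ioi (0 : ℝ), x ^ k * exp x / (exp x - 1) ^ 2) := by
  have hS : HasSum (fun n : ℕ ↦ (k ! : ℝ) / n ^ k) (k ! * ∑' n : ℕ, 1 / (n : ℝ) ^ k) := by
    simpa only [mul_one_div] using
      (summable_one_div_nat_pow.mpr hk).hasSum.mul_left (k ! : ℝ)
  obtain ⟨hint, hval⟩ := integrable_and_integral_eq_of_hasSum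
    (μ := volume.restrict (Ioi 0)) (F := fun n x ↦ x ^ k * (n * exp (-(n * x))))
    (f := fun x ↦ x ^ k * exp x / (exp x - 1) ^ 2)
    (fun n ↦ ae_restrict_of_forall_mem measurableSet_Ioi fun x hx ↦ by
      have : 0 < x := hx
      positivity)
    (integrableOn_pow_mul_coe_mul_exp_neg_mul_Ioi k)
    (by simpa only [integral_pow_mul_coe_mul_exp_neg_mul_Ioi (by omega : k ≠ 0)] using hS)
    (ae_restrict_of_forall_mem measurableSet_Ioi fun x hx ↦ by
      simpa only [mul_div_assoc] using (hasSum_coe_mul_exp_neg_mul hx).mul_left (x ^ k))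
  exact ⟨hint, hval ▸ hS⟩

/-- `x ↦ x⁴eˣ/(eˣ − 1)²` is integrable on `(0,∞)` and
`∫₀^∞ x⁴eˣ/(eˣ − 1)² dx = 4π⁴/15`. -/
theorem bose_derivative_integral :
    IntegrableOn (fun x : ℝ => x ^ 4 * Real.exp x / (Real.exp x - 1) ^ 2)
      (Set.Ioi (0 : ℝ)) volume ∧
    (∫ x in Set.Ioi (0 : ℝ), x ^ 4 * Real.exp x / (Real.exp x - 1) ^ 2) = 4 * π ^ 4 / 15 := by
  obtain ⟨hint, hsum⟩ := integrableOn_and_hasSum_integral_pow_mul_exp_div_sq (k := 4) (by norm_num)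
  refine ⟨hint, hsum.unique ?_⟩
  have h := hasSum_zeta_four.mul_left 24
  rw [show (24 : ℝ) * (π ^ 4 / 90) = 4 * π ^ 4 / 15 by ring] at h
  refine h.congr_fun fun n ↦ ?_
  simp [Nat.factorial, div_eq_mul_inv]
end
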